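/- (Convergence of the alternating q-power sums) For every integer n ≥ 0, the sequence T_n(k) = ∑_{x=0}^{p^k − 1} (−1)^x [x]_q^n (k = 1, 2, 3, …) is a Cauchy sequence in ℤ_p and hence converges to a limit in ℤ_p. -/
import Mathlib


/-- The `q`-analogue `[x]_q = 1 + q + ⋯ + q^(x-1)` in `ℤ_p`. -/
noncomputable def qnum {p : ℕ} [Fact p.Prime] (q : ℤ_[p]) (x : ℕ) : ℤ_[p] :=
  ∑ l ∈ Finset.range x, q ^ l

lemma qnum_add {p : ℕ} [Fact p.Prime] (q : ℤ_[p]) (a b : ℕ) :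
    qnum q (a + b) = qnum q a + q ^ a * qnum q b := by
  unfold qnum
  rw [Finset.sum_range_add, Finset.mul_sum]
  simp [pow_add]

lemma qnum_succ {p : ℕ} [Fact p.Prime] (q : ℤ_[p]) (b : ℕ) :
    qnum q (b + 1) = qnum q b + q ^ b := by
  unfold qnum; rw [Finset.sum_range_succ]

lemma qnum_mul {p : ℕ} [Fact p.Prime] (q : ℤ_[p]) (a b : ℕ) :
    qnum q (a * b) = qnum q a * qnum (q ^ a) b := by
  induction b with
  | zero => simp [qnum]
  | succ b ih =>
      rw [Nat.mul_succ, qnum_add, ih, qnum_succ, pow_mul]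
      ring

lemma p_dvd_qnum_p {p : ℕ} [Fact p.Prime] (Q : ℤ_[p]) (hQ : (p : ℤ_[p]) ∣ (Q - 1)) :
    (p : ℤ_[p]) ∣ qnum Q p := by
  have h1 : qnum Q p = (∑ l ∈ Finset.range p, (Q ^ l - 1)) + p := by
    unfold qnum
    rw [Finset.sum_sub_distrib]
    simp
  rw [h1]
  refine dvd_add (Finset.dvd_sum fun l _ => ?_) dvd_rfl
  have : Q - 1 ∣ Q ^ l - 1 := by
    simpa using sub_dvd_pow_sub_pow Q 1 l
  exact dvd_trans hQ this

lemma pk_dvd_qnum_pk {p : ℕ} [Fact p.Prime] (q : ℤ_[p]) (hq : (p : ℤ_[p]) ∣ (q - 1))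
    (k : ℕ) : (p : ℤ_[p]) ^ k ∣ qnum q (p ^ k) := by
  induction k with
  | zero => simp
  | succ k ih =>
      have hQ : (p : ℤ_[p]) ∣ (q ^ (p ^ k) - 1) := by
        refine dvd_trans hq ?_
        simpa using sub_dvd_pow_sub_pow q 1 (p ^ k)
      have := mul_dvd_mul ih (p_dvd_qnum_p (q ^ (p ^ k)) hQ)
      rw [pow_succ, pow_succ]
      calc (p : ℤ_[p]) ^ k * p ∣ qnum q (p ^ k) * qnum (q ^ p ^ k) p := this
        _ = qnum q (p ^ k * p) := (qnum_mul q (p ^ k) p).symm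

lemma pk_dvd_qnum_mul {p : ℕ} [Fact p.Prime] (q : ℤ_[p]) (hq : (p : ℤ_[p]) ∣ (q - 1))
    (k j : ℕ) : (p : ℤ_[p]) ^ k ∣ qnum q (p ^ k * j) := by
  rw [qnum_mul]
  exact (pk_dvd_qnum_pk q hq k).mul_right _

lemma pk_dvd_qpow_sub_one {p : ℕ} [Fact p.Prime] (q : ℤ_[p]) (hq : (p : ℤ_[p]) ∣ (q - 1))
    (k m : ℕ) : (p : ℤ_[p]) ^ k ∣ q ^ (p ^ k * m) - 1 := by
  have h1 : (p : ℤ_[p]) ^ k ∣ q ^ (p ^ k) - 1 := by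
    rw [← geom_sum_mul q (p ^ k)]
    exact ((pk_dvd_qnum_pk q hq k).mul_right _)
  calc (p : ℤ_[p]) ^ k ∣ q ^ (p ^ k) - 1 := h1
    _ ∣ (q ^ (p ^ k)) ^ m - 1 := by simpa using sub_dvd_pow_sub_pow (q ^ (p ^ k)) 1 m
    _ = q ^ (p ^ k * m) - 1 := by rw [pow_mul]

lemma sum_range_mul_decomp {β : Type*} [AddCommMonoid β] (f : ℕ → β) (a b : ℕ) :
    ∑ x ∈ Finset.range (a * b), f x
      = ∑ j ∈ Finset.range b, ∑ i ∈ Finset.range a, f (a * j + i) := by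
  induction b with
  | zero => simp
  | succ b ih =>
      rw [Nat.mul_succ, Finset.sum_range_add, ih, Finset.sum_range_succ]

/-- **Convergence of the alternating `q`-power sums.** For every `n ≥ 0`, the sequence
`T_n(k) = ∑_{x=0}^{p^k−1} (−1)^x [x]_q^n` is Cauchy in `ℤ_p` and hence converges. -/
theorem alternating_q_power_sums_converge (p : ℕ) [Fact p.Prime] (hp : Odd p)
    (q : ℤ_[p]) (hq : (p : ℤ_[p]) ∣ (q - 1)) (n : ℕ) :
    CauchySeq
      (fun k : ℕ => ∑ x ∈ Finset.range (p ^ k), (-1 : ℤ_[p]) ^ x * (qnum q x) ^ n) ∧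
    ∃ L : ℤ_[p],
      Filter.Tendsto
        (fun k : ℕ => ∑ x ∈ Finset.range (p ^ k), (-1 : ℤ_[p]) ^ x * (qnum q x) ^ n)
        Filter.atTop (nhds L) := by
  set T : ℕ → ℤ_[p] :=
    fun k : ℕ => ∑ x ∈ Finset.range (p ^ k), (-1 : ℤ_[p]) ^ x * (qnum q x) ^ n with hT
  have hppos := (Fact.out : p.Prime).pos
  -- key divisibility
  have key : ∀ k : ℕ, (p : ℤ_[p]) ^ k ∣ T (k + 1) - T k := by
    intro k
    have hpk_odd : Odd (p ^ k) := hp.pow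
    have hblock : ∀ j : ℕ,
        (p : ℤ_[p]) ^ k ∣
          (∑ i ∈ Finset.range (p ^ k),
              (-1 : ℤ_[p]) ^ (p ^ k * j + i) * (qnum q (p ^ k * j + i)) ^ n)
            - (-1 : ℤ_[p]) ^ j * T k := by
      intro j
      have hsign : ∀ i : ℕ, ((-1 : ℤ_[p])) ^ (p ^ k * j + i)
          = (-1 : ℤ_[p]) ^ j * (-1 : ℤ_[p]) ^ i := by
        intro i
        rw [pow_add, pow_mul, hpk_odd.neg_one_pow]
      have hterm : ∀ i : ℕ,
          (p : ℤ_[p]) ^ k ∣ (qnum q (p ^ k * j + i)) ^ n - (qnum q i) ^ n := by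
        intro i
        have hd : (p : ℤ_[p]) ^ k ∣ qnum q (p ^ k * j + i) - qnum q i := by
          rw [qnum_add]
          have : qnum q (p ^ k * j) + q ^ (p ^ k * j) * qnum q i - qnum q i
              = qnum q (p ^ k * j) + (q ^ (p ^ k * j) - 1) * qnum q i := by ring
          rw [this]
          exact dvd_add (pk_dvd_qnum_mul q hq k j)
            ((pk_dvd_qpow_sub_one q hq k j).mul_right _)
        exact hd.trans (sub_dvd_pow_sub_pow _ _ n)
      have hrw : (∑ i ∈ Finset.range (p ^ k),
              (-1 : ℤ_[p]) ^ (p ^ k * j + i) * (qnum q (p ^ k * j + i)) ^ n)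
            - (-1 : ℤ_[p]) ^ j * T k
          = ∑ i ∈ Finset.range (p ^ k),
              (-1 : ℤ_[p]) ^ j * ((-1 : ℤ_[p]) ^ i
                * ((qnum q (p ^ k * j + i)) ^ n - (qnum q i) ^ n)) := by
        rw [hT]
        rw [Finset.mul_sum, ← Finset.sum_sub_distrib]
        refine Finset.sum_congr rfl fun i _ => ?_
        rw [hsign i]
        ring
      rw [hrw]
      exact Finset.dvd_sum fun i _ =>
        ((hterm i).mul_left _).mul_left _
    have hsum : ∑ j ∈ Finset.range p, ((-1 : ℤ_[p])) ^ j = 1 := by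
      rw [neg_one_geom_sum, if_neg (by simpa [Nat.not_even_iff_odd] using hp)]
    have hdecomp : T (k + 1)
        = ∑ j ∈ Finset.range p, ∑ i ∈ Finset.range (p ^ k),
            (-1 : ℤ_[p]) ^ (p ^ k * j + i) * (qnum q (p ^ k * j + i)) ^ n := by
      simp only [hT]
      have : p ^ (k + 1) = p ^ k * p := by ring
      rw [this, sum_range_mul_decomp]
    have : T (k + 1) - T k
        = ∑ j ∈ Finset.range p,
            ((∑ i ∈ Finset.range (p ^ k),
              (-1 : ℤ_[p]) ^ (p ^ k * j + i) * (qnum q (p ^ k * j + i)) ^ n)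
              - (-1 : ℤ_[p]) ^ j * T k) := by
      rw [Finset.sum_sub_distrib, ← hdecomp, ← Finset.sum_mul, hsum, one_mul]
    rw [this]
    exact Finset.dvd_sum fun j _ => hblock j
  -- Cauchy sequence
  have hnorm : ∀ k : ℕ, dist (T k) (T (k + 1)) ≤ 1 * ((p : ℝ)⁻¹) ^ k := by
    intro k
    rw [dist_eq_norm, ← norm_neg, neg_sub]
    have h1 : ‖T (k + 1) - T k‖ ≤ (p : ℝ) ^ (-(k : ℤ)) := by
      rw [PadicInt.norm_le_pow_iff_mem_span_pow, Ideal.mem_span_singleton]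
      exact key k
    calc ‖T (k + 1) - T k‖ ≤ (p : ℝ) ^ (-(k : ℤ)) := h1
      _ = 1 * ((p : ℝ)⁻¹) ^ k := by
          rw [one_mul, inv_pow, ← zpow_natCast (p : ℝ), ← zpow_neg]
  have hr : ((p : ℝ)⁻¹) < 1 := by
    rw [inv_lt_one_iff₀]
    right
    exact_mod_cast (Fact.out : p.Prime).one_lt
  have hc : CauchySeq T := cauchySeq_of_le_geometric _ 1 hr hnorm
  exact ⟨hc, cauchySeq_tendsto_of_complete hc⟩
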